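/- arXiv:1407.0961 — 7 statements merged into one kernel-verified Lean document; each statement's English description precedes it below -/
import Mathlib

section
/- Let n be a natural number and let f : (Fin n → ℕ) → (Fin n → ℕ) be a map that commutes with monotone postprocessing, i.e., for every monotone function g : ℕ → ℕ and every input x : Fin n → ℕ, f (g ∘ x) = g ∘ (f x). If for every 0-1 valued input x : Fin n → ℕ (that is, x i ≤ 1 for all i) the output f x is monotone (nondecreasing in the index), then for every input x : Fin n → ℕ the output f x is monotone. -/
/-- Zero-one principle: if `f` commutes with monotone postprocessing and sorts
all 0-1 inputs, then it sorts all inputs. -/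
theorem zero_one_principle (n : ℕ) (f : (Fin n → ℕ) → (Fin n → ℕ))
    (hcomm : ∀ g : ℕ → ℕ, Monotone g → ∀ x : Fin n → ℕ, f (g ∘ x) = g ∘ (f x))
    (h01 : ∀ x : Fin n → ℕ, (∀ i, x i ≤ 1) → Monotone (f x)) :
    ∀ x : Fin n → ℕ, Monotone (f x) := by
  intro x i j hij
  by_contra hlt
  push_neg at hlt
  set g : ℕ → ℕ := fun a => if f x i ≤ a then 1 else 0 with hg
  have hmono : Monotone g := by
    intro a b hab
    simp only [hg]
    split_ifs with h1 h2 <;> omega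
  have h01' : Monotone (f (g ∘ x)) := by
    apply h01
    intro k
    simp only [hg, Function.comp]
    split_ifs <;> omega
  rw [hcomm g hmono x] at h01'
  have := h01' hij
  simp only [hg, Function.comp] at this
  rw [if_pos le_rfl, if_neg (by omega)] at this
  omega
end

section
/- Let n be a natural number and f : (Fin n → ℕ) → (Fin n → ℕ) a map such that (i) for every monotone g : ℕ → ℕ and every x, f (g ∘ x) = g ∘ (f x), (ii) for every x there exists a permutation σ of Fin n with f x = x ∘ σ, and (iii) for every 0-1 valued x (x i ≤ 1 for all i), f x is monotone. Then for every x : Fin n → ℕ, f x equals the monotone rearrangement of x, i.e., f x = x ∘ Tuple.sort x. -/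
/-- Zero-one principle with permutation: a comparator-network-like map that
permutes its input, commutes with monotone postprocessing, and sorts all 0-1
inputs, outputs the monotone rearrangement of every input. -/
theorem zero_one_principle_sort (n : ℕ) (f : (Fin n → ℕ) → (Fin n → ℕ))
    (hcomm : ∀ g : ℕ → ℕ, Monotone g → ∀ x : Fin n → ℕ, f (g ∘ x) = g ∘ (f x))
    (hperm : ∀ x : Fin n → ℕ, ∃ σ : Equiv.Perm (Fin n), f x = x ∘ σ)
    (h01 : ∀ x : Fin n → ℕ, (∀ i, x i ≤ 1) → Monotone (f x)) :
    ∀ x : Fin n → ℕ, f x = x ∘ Tuple.sort x := by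
  intro x
  have hmono : Monotone (f x) := by
    intro i j hij
    by_contra hc
    push_neg at hc
    set k := f x i with hk
    set g : ℕ → ℕ := fun a => if k ≤ a then 1 else 0 with hg
    have hgm : Monotone g := by
      intro a b hab
      simp only [hg]
      split_ifs with h1 h2 <;> omega
    have h01' : ∀ i, (g ∘ x) i ≤ 1 := by
      intro i; simp only [Function.comp, hg]; split_ifs <;> omega
    have hm := h01 (g ∘ x) h01'
    rw [hcomm g hgm x] at hm
    have := hm hij
    simp only [Function.comp, hg] at this
    rw [if_pos le_rfl, if_neg (by omega)] at this
    omega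
  obtain ⟨σ, hσ⟩ := hperm x
  rw [hσ]
  exact Tuple.comp_sort_eq_comp_iff_monotone.mpr (hσ ▸ hmono)
end

section
/- Let α be a linear order and M : Fin n → Fin m → α a matrix (row j is the list ⟨M j 1, …, M j m⟩) such that every row is sorted, i.e., for each j the function s ↦ M j s is monotone. Define M' by independently sorting each column: for each column s, let σ_s = Tuple.sort (fun j => M j s) and set M' j s = M (σ_s j) s. Then every row of M' is still sorted: for each j, the function s ↦ M' j s is monotone. -/
open Finset in
private lemma card_filter_perm {n : ℕ} (σ : Equiv.Perm (Fin n)) (P : Fin n → Prop)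
    [DecidablePred P] :
    (univ.filter (fun i => P (σ i))).card = (univ.filter P).card := by
  apply Finset.card_bij (fun i _ => σ i)
  · intro a ha; simp_all
  · intro a ha b hb h; exact σ.injective h
  · intro b hb; exact ⟨σ.symm b, by simp_all, by simp⟩

open Finset in
private lemma sorted_le_of_le {n : ℕ} {α : Type*} [LinearOrder α]
    (u v : Fin n → α) (huv : ∀ i, u i ≤ v i) (j : Fin n) :
    u (Tuple.sort u j) ≤ v (Tuple.sort v j) := by
  classical
  set gu := u ∘ Tuple.sort u with hgu
  set gv := v ∘ Tuple.sort v with hgv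
  have mu : Monotone gu := Tuple.monotone_sort u
  have mv : Monotone gv := Tuple.monotone_sort v
  set x := gv j with hx
  -- card of {i | v i ≤ x} is at least j+1
  have h1 : (j : ℕ) + 1 ≤ (univ.filter (fun i => v i ≤ x)).card := by
    have := card_filter_perm (Tuple.sort v) (fun i => v i ≤ x)
    rw [← this]
    have hsub : (univ.filter (fun i : Fin n => i ≤ j)) ⊆
        (univ.filter (fun i => v (Tuple.sort v i) ≤ x)) := by
      intro i hi
      simp only [mem_filter, mem_univ, true_and] at hi ⊢
      exact mv hi
    calc (j : ℕ) + 1 = (univ.filter (fun i : Fin n => i ≤ j)).card := by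
          rw [show (univ.filter (fun i : Fin n => i ≤ j)) = Finset.Iic j by ext i; simp, Fin.card_Iic]
      _ ≤ _ := Finset.card_le_card hsub
  -- hence card of {i | u i ≤ x} is at least j+1
  have h2 : (j : ℕ) + 1 ≤ (univ.filter (fun i => u i ≤ x)).card := by
    refine h1.trans (Finset.card_le_card ?_)
    intro i hi
    simp only [mem_filter, mem_univ, true_and] at hi ⊢
    exact (huv i).trans hi
  have h3 : (j : ℕ) + 1 ≤ (univ.filter (fun i => gu i ≤ x)).card := by
    rw [hgu]
    have := card_filter_perm (Tuple.sort u) (fun i => u i ≤ x)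
    simpa [this] using h2
  -- conclude gu j ≤ x
  by_contra hc
  push_neg at hc
  have hsub : (univ.filter (fun i => gu i ≤ x)) ⊆ (univ.filter (fun i : Fin n => i < j)) := by
    intro i hi
    simp only [mem_filter, mem_univ, true_and] at hi ⊢
    by_contra hij
    push_neg at hij
    exact absurd (mu hij) (not_le.mpr (lt_of_le_of_lt hi hc))
  have := (Finset.card_le_card hsub)
  have hcard : (univ.filter (fun i : Fin n => i < j)).card = j := by
    rw [show (univ.filter (fun i : Fin n => i < j)) = Finset.Iio j by ext i; simp, Fin.card_Iio]
  omega

/-- Lemma 1: sorting each column of a matrix with sorted rows leaves every row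
sorted. -/
theorem rows_sorted_after_column_sort {n m : ℕ} {α : Type*} [LinearOrder α]
    (M : Fin n → Fin m → α) (hrows : ∀ j : Fin n, Monotone (fun s => M j s)) :
    ∀ j : Fin n,
      Monotone (fun s : Fin m => M (Tuple.sort (fun i => M i s) j) s) := by
  intro j s t hst
  exact sorted_le_of_le (fun i => M i s) (fun i => M i t) (fun i => hrows i hst) j
end

section
/- Let M : Fin n → Fin m → Bool be a 0-1 matrix (false playing the role of 0, with false < true) in which every row is sorted, i.e., for each j the function s ↦ M j s is monotone. For row j let r j = (Finset.univ.filter (fun s => M j s = false)).card be its number of zeros. Let M' be obtained by sorting each column: M' j s = M (Tuple.sort (fun i => M i s) j) s, and let r' j be the number of zeros of row j of M'. Then r' is antitone (r' j ≥ r' j' whenever j ≤ j'), and the multiset of values {r' j : j} equals the multiset {r j : j}. In other words, sorting the columns rearranges the rows' zero counts into nonincreasing order. -/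
private lemma aux_card_lt {m : ℕ} {k : ℕ} (hk : k ≤ m) :
    (Finset.univ.filter (fun s : Fin m => s.val < k)).card = k := by
  have : (Finset.univ.filter (fun s : Fin m => s.val < k)) =
      Finset.map (Fin.castLEEmb hk) Finset.univ := by
    ext s
    simp [Fin.ext_iff, Fin.lt_iff_val_lt_val]
    constructor
    · intro h; exact ⟨⟨s.val, h⟩, rfl⟩
    · rintro ⟨t, ht⟩; omega
  simp [this]

private lemma lower_iff {m : ℕ} (P : Fin m → Prop) [DecidablePred P]
    (hP : ∀ ⦃s t : Fin m⦄, s ≤ t → P t → P s) (s : Fin m) :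
    P s ↔ s.val < (Finset.univ.filter P).card := by
  constructor
  · intro hs
    have hsub : Finset.univ.filter (fun t : Fin m => t.val ≤ s.val) ⊆
        Finset.univ.filter P := by
      intro t ht
      simp only [Finset.mem_filter, Finset.mem_univ, true_and] at ht ⊢
      exact hP (Fin.le_def.mpr ht) hs
    have h1 : (Finset.univ.filter (fun t : Fin m => t.val ≤ s.val)).card = s.val + 1 := by
      have he : (Finset.univ.filter (fun t : Fin m => t.val ≤ s.val))
          = Finset.univ.filter (fun t : Fin m => t.val < s.val + 1) := by
        apply Finset.filter_congr
        intro t _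
        simp [Nat.lt_succ_iff]
      rw [he]
      exact aux_card_lt s.isLt
    have := Finset.card_le_card hsub
    omega
  · intro h
    by_contra hs
    have hsub : Finset.univ.filter P ⊆
        Finset.univ.filter (fun t : Fin m => t.val < s.val) := by
      intro t ht
      simp only [Finset.mem_filter, Finset.mem_univ, true_and] at ht ⊢
      by_contra hc
      push_neg at hc
      exact hs (hP (Fin.le_def.mpr hc) ht)
    have := Finset.card_le_card hsub
    rw [aux_card_lt (le_of_lt s.isLt)] at this
    omega

/-- Sorting the columns of a 0-1 matrix with sorted rows rearranges the rows'
zero counts into nonincreasing order. -/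
theorem column_sort_zero_counts {n m : ℕ} (M : Fin n → Fin m → Bool)
    (hrows : ∀ j : Fin n, Monotone (fun s => M j s))
    (r : Fin n → ℕ)
    (hr : ∀ j, r j = (Finset.univ.filter (fun s => M j s = false)).card)
    (M' : Fin n → Fin m → Bool)
    (hM' : ∀ j s, M' j s = M (Tuple.sort (fun i => M i s) j) s)
    (r' : Fin n → ℕ)
    (hr' : ∀ j, r' j = (Finset.univ.filter (fun s => M' j s = false)).card) :
    Antitone r' ∧ Multiset.map r' Finset.univ.val = Multiset.map r Finset.univ.val := by
  classical
  set c : Fin m → ℕ := fun s => (Finset.univ.filter (fun i => M i s = false)).card with hc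
  -- Fact A : M j s = false ↔ s.val < r j
  have factA : ∀ j s, M j s = false ↔ s.val < r j := by
    intro j s
    rw [hr j]
    exact lower_iff (fun s => M j s = false)
      (fun s t hst ht => le_antisymm (ht ▸ hrows j hst) (Bool.false_le _)) s
  -- column of M' is monotone
  have hcolmono : ∀ s, Monotone (fun j => M' j s) := by
    intro s
    have := Tuple.monotone_sort (fun i => M i s)
    intro a b hab
    simp only [hM']
    exact this hab
  -- zero count of column s of M' equals c s
  have hcolcount : ∀ s, (Finset.univ.filter (fun j => M' j s = false)).card = c s := by
    intro s
    rw [hc]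
    apply Finset.card_bij' (fun j _ => Tuple.sort (fun i => M i s) j)
      (fun i _ => (Tuple.sort (fun i => M i s)).symm i)
    · intro j hj
      simp only [Finset.mem_filter, Finset.mem_univ, true_and] at hj ⊢
      rw [← hM']; exact hj
    · intro i hi
      simp only [Finset.mem_filter, Finset.mem_univ, true_and] at hi ⊢
      rw [hM']; simpa using hi
    · intro j _; simp
    · intro i _; simp
  -- Fact B : M' j s = false ↔ j.val < c s
  have factB : ∀ j s, M' j s = false ↔ j.val < c s := by
    intro j s
    rw [← hcolcount s]
    exact lower_iff (fun j => M' j s = false)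
      (fun a b hab hb => le_antisymm (hb ▸ hcolmono s hab) (Bool.false_le _)) j
  -- r' j = #{s : j.val < c s}
  have hr'c : ∀ j, r' j = (Finset.univ.filter (fun s => j.val < c s)).card := by
    intro j
    rw [hr' j]
    congr 1
    apply Finset.filter_congr
    intro s _
    simp [factB j s]
  -- c is antitone
  have hcr : ∀ s i, M i s = false ↔ s.val < r i := fun s i => factA i s
  have hcanti : ∀ s t : Fin m, s ≤ t → c t ≤ c s := by
    intro s t hst
    apply Finset.card_le_card
    intro i hi
    simp only [Finset.mem_filter, Finset.mem_univ, true_and] at hi ⊢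
    rw [factA] at hi ⊢
    have := Fin.le_def.mp hst
    omega
  -- Fact C : j.val < c s ↔ s.val < r' j
  have factC : ∀ j s, j.val < c s ↔ s.val < r' j := by
    intro j s
    rw [hr'c j]
    exact lower_iff (fun s => j.val < c s)
      (fun a b hab hb => lt_of_lt_of_le hb (hcanti a b hab)) s
  -- bounds
  have hrm : ∀ j, r j ≤ m := by
    intro j; rw [hr j]
    calc _ ≤ Finset.univ.card := Finset.card_filter_le _ _
    _ = m := by simp
  have hr'm : ∀ j, r' j ≤ m := by
    intro j; rw [hr' j]
    calc _ ≤ Finset.univ.card := Finset.card_filter_le _ _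
    _ = m := by simp
  have hcn : ∀ s, c s ≤ n := by
    intro s
    calc _ ≤ Finset.univ.card := Finset.card_filter_le _ _
    _ = n := by simp
  -- key counting identity
  have key : ∀ k : ℕ, (Finset.univ.filter (fun j => k ≤ r' j)).card
      = (Finset.univ.filter (fun j => k ≤ r j)).card := by
    intro k
    match k with
    | 0 => simp
    | (k' + 1) =>
      by_cases hkm : k' < m
      · set s : Fin m := ⟨k', hkm⟩ with hs
        have hsv : (s : ℕ) = k' := rfl
        have h1 : (Finset.univ.filter (fun j => k' + 1 ≤ r j)).card = c s := by
          rw [hc]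
          congr 1
          apply Finset.filter_congr
          intro j _
          rw [factA j s, hsv]
          omega
        have h2 : (Finset.univ.filter (fun j => k' + 1 ≤ r' j)).card = c s := by
          have : (Finset.univ.filter (fun j : Fin n => k' + 1 ≤ r' j))
              = Finset.univ.filter (fun j : Fin n => j.val < c s) := by
            apply Finset.filter_congr
            intro j _
            have hfc := factC j s
            omega
          rw [this, aux_card_lt (hcn s)]
        rw [h1, h2]
      · have e1 : (Finset.univ.filter (fun j : Fin n => k' + 1 ≤ r j)) = ∅ := by
          apply Finset.filter_false_of_mem
          intro j _
          have := hrm j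
          omega
        have e2 : (Finset.univ.filter (fun j : Fin n => k' + 1 ≤ r' j)) = ∅ := by
          apply Finset.filter_false_of_mem
          intro j _
          have := hr'm j
          omega
        rw [e1, e2]
  constructor
  · intro j j' hjj'
    rw [hr'c j, hr'c j']
    apply Finset.card_le_card
    intro s hs
    simp only [Finset.mem_filter, Finset.mem_univ, true_and] at hs ⊢
    have := Fin.le_def.mp hjj'
    omega
  · -- multiset equality via counts
    have countkey : ∀ a : ℕ, (Finset.univ.filter (fun j => r' j = a)).card
        = (Finset.univ.filter (fun j => r j = a)).card := by
      intro a
      have split : ∀ f : Fin n → ℕ, (Finset.univ.filter (fun j => a ≤ f j)).card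
          = (Finset.univ.filter (fun j => f j = a)).card
            + (Finset.univ.filter (fun j => a + 1 ≤ f j)).card := by
        intro f
        rw [← Finset.card_union_of_disjoint]
        · congr 1
          ext j
          simp only [Finset.mem_union, Finset.mem_filter, Finset.mem_univ, true_and]
          omega
        · rw [Finset.disjoint_filter]
          intro j _ h1
          omega
      have h1 := split r
      have h2 := split r'
      have k1 := key a
      have k2 := key (a + 1)
      omega
    rw [Multiset.ext]
    intro a
    rw [Multiset.count_map, Multiset.count_map]
    have : ∀ f : Fin n → ℕ, Multiset.card (Multiset.filter (fun j => a = f j) Finset.univ.val)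
        = (Finset.univ.filter (fun j => f j = a)).card := by
      intro f
      rw [Finset.card_filter]
      simp [Finset.sum_boole, eq_comm]
      rfl
    rw [this r, this r', countkey a]
end

section
/- Let M : Fin n → Fin m → Bool be a 0-1 matrix in which every row is sorted (for each j, s ↦ M j s is monotone, with false < true). Let M' be obtained by sorting each column: M' j s = M (Tuple.sort (fun i => M i s) j) s, and let r' j = (Finset.univ.filter (fun s => M' j s = false)).card be the number of zeros in row j of M'. Then the zero counts of consecutive rows are nonincreasing: for all j with j + 1 < n, r' (j+1) ≤ r' j. -/
/-- First claim of Lemma 3: after sorting the columns of a 0-1 matrix with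
sorted rows, the numbers of zeros of consecutive rows are nonincreasing. -/
theorem column_sort_zero_counts_consecutive {n m : ℕ} (M : Fin n → Fin m → Bool)
    (hrows : ∀ j : Fin n, Monotone (fun s => M j s))
    (M' : Fin n → Fin m → Bool)
    (hM' : ∀ j s, M' j s = M (Tuple.sort (fun i => M i s) j) s)
    (r' : Fin n → ℕ)
    (hr' : ∀ j, r' j = (Finset.univ.filter (fun s => M' j s = false)).card) :
    ∀ j : ℕ, (h : j + 1 < n) →
      r' ⟨j + 1, h⟩ ≤ r' ⟨j, Nat.lt_of_succ_lt h⟩ := by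
  intro j h
  rw [hr', hr']
  apply Finset.card_le_card
  intro s hs
  simp only [Finset.mem_filter, Finset.mem_univ, true_and] at hs ⊢
  have hmono := Tuple.monotone_sort (fun i => M i s)
  have hle : M' ⟨j, Nat.lt_of_succ_lt h⟩ s ≤ M' ⟨j + 1, h⟩ s := by
    rw [hM', hM']
    exact hmono (show (⟨j, Nat.lt_of_succ_lt h⟩ : Fin n) ≤ ⟨j + 1, h⟩ by
      simp [Fin.le_def])
  rw [hs] at hle
  exact le_bot_iff.mp hle
end

section
/- Let n ≥ 2 and p ≥ 1 be natural numbers, and work in ℚ. Set c = ⌈n/2⌉, A = 1 + c(c−1)/2, and C* = (c−1)·n − 3c(c−1)/2 − 1. Then ∑_{i=1}^{p−1} n^{i−1} · ( (p−i)·A·n^{p−i} + ((n^{p−i} − 1)/(n−1))·C* + n^{p−i} ) + n^{p−1} = (p(p−1)/2)·A·n^{p−1} + ( (p−1)·n^{p−1}/(n−1) − (n^{p−1} − 1)/(n−1)² )·C* + p·n^{p−1}. -/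
lemma sum_Icc_id_cast (m : ℕ) :
    ∑ i ∈ Finset.Icc 1 m, (i : ℚ) = (m : ℚ) * ((m : ℚ) + 1) / 2 := by
  induction m with
  | zero => simp
  | succ k ih =>
    rw [Finset.sum_Icc_succ_top (by omega : 1 ≤ k + 1), ih]
    push_cast
    ring

lemma sum_Icc_geom (x : ℚ) (m : ℕ) :
    ∑ i ∈ Finset.Icc 1 m, x ^ (i - 1) = ∑ j ∈ Finset.range m, x ^ j := by
  induction m with
  | zero => simp
  | succ k ih =>
    rw [Finset.sum_Icc_succ_top (by omega : 1 ≤ k + 1), ih,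
      Finset.sum_range_succ, Nat.add_sub_cancel]

/-- Equation (3): closed-form evaluation of the total number of sorters of the
proposed sorting network, as an identity of rational numbers. -/
theorem total_sorters_closed_form (n p : ℕ) (hn : 2 ≤ n) (hp : 1 ≤ p)
    (c A Cst : ℚ)
    (hc : c = (((n + 1) / 2 : ℕ) : ℚ))
    (hA : A = 1 + c * (c - 1) / 2)
    (hC : Cst = (c - 1) * n - 3 * c * (c - 1) / 2 - 1) :
    ∑ i ∈ Finset.Icc 1 (p - 1),
        (n : ℚ) ^ (i - 1) *
          (((p - i : ℕ) : ℚ) * A * (n : ℚ) ^ (p - i) +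
            (((n : ℚ) ^ (p - i) - 1) / ((n : ℚ) - 1)) * Cst +
            (n : ℚ) ^ (p - i)) +
      (n : ℚ) ^ (p - 1) =
    ((p : ℚ) * ((p : ℚ) - 1) / 2) * A * (n : ℚ) ^ (p - 1) +
      (((p : ℚ) - 1) * (n : ℚ) ^ (p - 1) / ((n : ℚ) - 1) -
        ((n : ℚ) ^ (p - 1) - 1) / ((n : ℚ) - 1) ^ 2) * Cst +
      (p : ℚ) * (n : ℚ) ^ (p - 1) := by
  obtain ⟨m, rfl⟩ : ∃ m, p = m + 1 := ⟨p - 1, by omega⟩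
  set x : ℚ := (n : ℚ) with hxdef
  have hn2 : (2 : ℚ) ≤ x := by rw [hxdef]; exact_mod_cast hn
  have hx1 : x ≠ 1 := by linarith
  have hx : x - 1 ≠ 0 := sub_ne_zero.mpr hx1
  simp only [Nat.add_sub_cancel]
  have key : ∑ i ∈ Finset.Icc 1 m,
      x ^ (i - 1) *
        (((m + 1 - i : ℕ) : ℚ) * A * x ^ (m + 1 - i) +
          ((x ^ (m + 1 - i) - 1) / (x - 1)) * Cst + x ^ (m + 1 - i)) =
      ∑ i ∈ Finset.Icc 1 m,
        ((-(A * x ^ m)) * (i : ℚ) + (-(Cst / (x - 1))) * x ^ (i - 1) +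
          (((m : ℚ) + 1) * A * x ^ m + x ^ m * Cst / (x - 1) + x ^ m)) := by
    refine Finset.sum_congr rfl fun i hi => ?_
    simp only [Finset.mem_Icc] at hi
    have e1 : x ^ (i - 1) * x ^ (m + 1 - i) = x ^ m := by
      rw [← pow_add]; congr 1; omega
    have hle : i ≤ m + 1 := by omega
    have e2 : ((m + 1 - i : ℕ) : ℚ) = (m : ℚ) + 1 - (i : ℚ) := by
      rw [Nat.cast_sub hle]; push_cast; ring
    rw [e2, ← e1]
    field_simp
    ring
  rw [key]
  rw [Finset.sum_add_distrib, Finset.sum_add_distrib, ← Finset.mul_sum,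
    ← Finset.mul_sum, Finset.sum_const, Nat.card_Icc,
    sum_Icc_id_cast, sum_Icc_geom, geom_sum_eq hx1]
  simp only [Nat.add_sub_cancel, nsmul_eq_mul]
  push_cast
  field_simp
  ring
end

section
/- Fix a natural number n ≥ 2 and let c = ⌈n/2⌉, B = (n+1−c)(n−c)/2 + (c+1)(c−2)/2 + 2, C† = (c−2)·n − 3(c+1)(c−2)/2 − (n+1−c)(n−c)/2 − (n−3), and define T_SSMk(p) = (p−1)·B·n^{p−1} + ((n^{p−1}−1)/(n−1))·C† + n^{p−1} + n^{p−1}·∑_{i=1}^{p−2} Nat.clog 2 (n^{i}) + ∑_{i=1}^{p−1} n^{i−1}·(n−3)·2^{Nat.clog 2 (n^{p−1−i})+1} as a rational number. Then there exists a constant C > 0 such that for all p ≥ 1, T_SSMk(p) ≤ C · n^{p} · p². That is, for bounded sorter size n, the number of sorters used by the SS-Mk algorithm to sort N = n^p inputs is O(N log² N). -/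
private lemma pow_clog_succ_le (m : ℕ) (hm : 1 ≤ m) :
    2 ^ (Nat.clog 2 m + 1) ≤ 4 * m := by
  rcases eq_or_lt_of_le hm with h | h
  · simp [← h, Nat.clog_one_right]
  · have hpos := Nat.clog_pos (by norm_num : 1 < 2) h
    have hlt := Nat.pow_pred_clog_lt_self (by norm_num : 1 < 2) h
    have heq : Nat.clog 2 m + 1 = (Nat.clog 2 m - 1) + 2 := by omega
    rw [heq, pow_add]
    have hle : 2 ^ (Nat.clog 2 m - 1) ≤ m := by
      have h' : 2 ^ (Nat.clog 2 m - 1) < m := by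
        simpa [Nat.pred_eq_sub_one] using hlt
      exact h'.le
    calc 2 ^ (Nat.clog 2 m - 1) * 2 ^ 2 ≤ m * 4 := by
          exact Nat.mul_le_mul hle (by norm_num)
      _ = 4 * m := by ring

set_option maxHeartbeats 1600000 in
/-- For bounded sorter size `n`, the number of sorters of the SS-Mk algorithm
on `N = n^p` inputs is `O(N log² N)`. -/
theorem total_sorters_SSMk_bigO (n : ℕ) (hn : 2 ≤ n)
    (c B Cd : ℚ)
    (hc : c = (((n + 1) / 2 : ℕ) : ℚ))
    (hB : B = ((n : ℚ) + 1 - c) * ((n : ℚ) - c) / 2 + (c + 1) * (c - 2) / 2 + 2)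
    (hC : Cd = (c - 2) * (n : ℚ) - 3 * (c + 1) * (c - 2) / 2 -
      ((n : ℚ) + 1 - c) * ((n : ℚ) - c) / 2 - ((n : ℚ) - 3))
    (TSSMk : ℕ → ℚ)
    (hT : ∀ p : ℕ, TSSMk p =
      ((p : ℚ) - 1) * B * (n : ℚ) ^ (p - 1) +
        (((n : ℚ) ^ (p - 1) - 1) / ((n : ℚ) - 1)) * Cd +
        (n : ℚ) ^ (p - 1) +
        (n : ℚ) ^ (p - 1) * ∑ i ∈ Finset.Icc 1 (p - 2), ((Nat.clog 2 (n ^ i) : ℕ) : ℚ) +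
        ∑ i ∈ Finset.Icc 1 (p - 1),
          (n : ℚ) ^ (i - 1) * ((n : ℚ) - 3) * 2 ^ (Nat.clog 2 (n ^ (p - 1 - i)) + 1)) :
    ∃ C : ℚ, 0 < C ∧ ∀ p : ℕ, 1 ≤ p →
      TSSMk p ≤ C * (n : ℚ) ^ p * (p : ℚ) ^ 2 := by
  refine ⟨|B| + |Cd| + 7, by positivity, ?_⟩
  intro p hp
  rw [hT p]
  set x : ℚ := (n : ℚ) with hxdef
  have hx2 : (2 : ℚ) ≤ x := by
    rw [hxdef]; exact_mod_cast hn
  have hx0 : (0 : ℚ) < x := by linarith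
  have hx1 : (1 : ℚ) ≤ x := by linarith
  have hX0 : (0 : ℚ) < x ^ (p - 1) := by positivity
  have hXp0 : (0 : ℚ) < x ^ p := by positivity
  have hXle : x ^ (p - 1) ≤ x ^ p := pow_le_pow_right₀ hx1 (Nat.sub_le p 1)
  have hX1 : (1 : ℚ) ≤ x ^ (p - 1) := one_le_pow₀ hx1
  have hp1 : (1 : ℚ) ≤ (p : ℚ) := by exact_mod_cast hp
  have hpsq : (1 : ℚ) ≤ (p : ℚ) ^ 2 := by nlinarith
  have hXx : x ^ (p - 1) * x = x ^ p := by
    rw [← pow_succ]; congr 1; omega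
  -- Term 1
  have h1 : ((p : ℚ) - 1) * B * x ^ (p - 1) ≤ |B| * (x ^ p * (p : ℚ) ^ 2) := by
    have hpm : (0 : ℚ) ≤ (p : ℚ) - 1 := by linarith
    have hpm2 : (p : ℚ) - 1 ≤ (p : ℚ) ^ 2 := by nlinarith
    have step1 : ((p : ℚ) - 1) * B ≤ ((p : ℚ) - 1) * |B| :=
      mul_le_mul_of_nonneg_left (le_abs_self B) hpm
    have step2 : ((p : ℚ) - 1) * |B| ≤ (p : ℚ) ^ 2 * |B| :=
      mul_le_mul_of_nonneg_right hpm2 (abs_nonneg B)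
    calc ((p : ℚ) - 1) * B * x ^ (p - 1)
        ≤ (p : ℚ) ^ 2 * |B| * x ^ p := by
          apply mul_le_mul (step1.trans step2) hXle hX0.le
          positivity
      _ = |B| * (x ^ p * (p : ℚ) ^ 2) := by ring
  -- Term 2
  have h2 : ((x ^ (p - 1) - 1) / (x - 1)) * Cd ≤ |Cd| * (x ^ p * (p : ℚ) ^ 2) := by
    have hr0 : (0 : ℚ) ≤ (x ^ (p - 1) - 1) / (x - 1) := by
      apply div_nonneg <;> linarith
    have hr1 : (x ^ (p - 1) - 1) / (x - 1) ≤ x ^ p := by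
      have : (x ^ (p - 1) - 1) / (x - 1) ≤ x ^ (p - 1) - 1 :=
        div_le_self (by linarith) (by linarith)
      linarith
    calc ((x ^ (p - 1) - 1) / (x - 1)) * Cd
        ≤ ((x ^ (p - 1) - 1) / (x - 1)) * |Cd| :=
          mul_le_mul_of_nonneg_left (le_abs_self Cd) hr0
      _ ≤ x ^ p * |Cd| := mul_le_mul_of_nonneg_right hr1 (abs_nonneg Cd)
      _ ≤ |Cd| * (x ^ p * (p : ℚ) ^ 2) := by
          nlinarith [mul_nonneg (mul_nonneg (abs_nonneg Cd) hXp0.le)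
            (by linarith : (0:ℚ) ≤ (p : ℚ) ^ 2 - 1)]
  -- Term 3
  have h3 : x ^ (p - 1) ≤ x ^ p * (p : ℚ) ^ 2 := by nlinarith
  -- Term 4
  have hSnat : (∑ i ∈ Finset.Icc 1 (p - 2), Nat.clog 2 (n ^ i)) ≤ (p - 2) * (p * n) := by
    have := Finset.sum_le_card_nsmul (Finset.Icc 1 (p - 2))
      (fun i => Nat.clog 2 (n ^ i)) (p * n) ?_
    · simpa [Nat.card_Icc, smul_eq_mul] using this
    · intro i hi
      obtain ⟨hi1, hi2⟩ := Finset.mem_Icc.mp hi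
      have hle : n ^ i ≤ 2 ^ (i * n) := by
        calc n ^ i ≤ (2 ^ n) ^ i := Nat.pow_le_pow_left (Nat.lt_two_pow_self (n := n)).le i
          _ = 2 ^ (i * n) := by rw [← pow_mul, Nat.mul_comm]
      have hc1 := (Nat.clog_le_iff_le_pow (by norm_num : 1 < 2)).mpr hle
      have hc2 : i * n ≤ p * n := Nat.mul_le_mul_right n (by omega)
      show Nat.clog 2 (n ^ i) ≤ p * n
      omega
  have h4 : x ^ (p - 1) * ∑ i ∈ Finset.Icc 1 (p - 2), ((Nat.clog 2 (n ^ i) : ℕ) : ℚ)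
      ≤ x ^ p * (p : ℚ) ^ 2 := by
    have hcast : (∑ i ∈ Finset.Icc 1 (p - 2), ((Nat.clog 2 (n ^ i) : ℕ) : ℚ))
        ≤ ((p - 2 : ℕ) : ℚ) * (((p : ℕ) : ℚ) * x) := by
      push_cast [hxdef]
      exact_mod_cast (by exact_mod_cast hSnat :
        ((∑ i ∈ Finset.Icc 1 (p - 2), Nat.clog 2 (n ^ i) : ℕ) : ℚ)
          ≤ (((p - 2) * (p * n) : ℕ) : ℚ))
    have hpm2 : ((p - 2 : ℕ) : ℚ) ≤ (p : ℚ) := by exact_mod_cast Nat.sub_le p 2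
    have hS0 : (0 : ℚ) ≤ ∑ i ∈ Finset.Icc 1 (p - 2), ((Nat.clog 2 (n ^ i) : ℕ) : ℚ) := by
      positivity
    calc x ^ (p - 1) * ∑ i ∈ Finset.Icc 1 (p - 2), ((Nat.clog 2 (n ^ i) : ℕ) : ℚ)
        ≤ x ^ (p - 1) * (((p - 2 : ℕ) : ℚ) * ((p : ℚ) * x)) :=
          mul_le_mul_of_nonneg_left hcast hX0.le
      _ ≤ x ^ (p - 1) * ((p : ℚ) * ((p : ℚ) * x)) := by
          apply mul_le_mul_of_nonneg_left _ hX0.le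
          apply mul_le_mul_of_nonneg_right hpm2
          positivity
      _ = (x ^ (p - 1) * x) * (p : ℚ) ^ 2 := by ring
      _ = x ^ p * (p : ℚ) ^ 2 := by rw [hXx]
  -- Term 5
  have h5 : (∑ i ∈ Finset.Icc 1 (p - 1),
      x ^ (i - 1) * (x - 3) * 2 ^ (Nat.clog 2 (n ^ (p - 1 - i)) + 1))
      ≤ 4 * (x ^ p * (p : ℚ) ^ 2) := by
    have hbound : ∀ i ∈ Finset.Icc 1 (p - 1),
        x ^ (i - 1) * (x - 3) * 2 ^ (Nat.clog 2 (n ^ (p - 1 - i)) + 1)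
          ≤ 4 * x ^ (p - 1) := by
      intro i hi
      obtain ⟨hi1, hi2⟩ := Finset.mem_Icc.mp hi
      rcases le_or_gt x 3 with h3x | h3x
      · have hneg : x ^ (i - 1) * (x - 3) ≤ 0 :=
          mul_nonpos_of_nonneg_of_nonpos (by positivity) (by linarith)
        have : x ^ (i - 1) * (x - 3) * 2 ^ (Nat.clog 2 (n ^ (p - 1 - i)) + 1) ≤ 0 :=
          mul_nonpos_of_nonpos_of_nonneg hneg (by positivity)
        have h40 : (0 : ℚ) ≤ 4 * x ^ (p - 1) := by positivity
        linarith
      · have hm1 : 1 ≤ n ^ (p - 1 - i) := Nat.one_le_pow _ _ (by omega)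
        have hkey := pow_clog_succ_le (n ^ (p - 1 - i)) hm1
        have hkeyQ : (2 : ℚ) ^ (Nat.clog 2 (n ^ (p - 1 - i)) + 1) ≤ 4 * x ^ (p - 1 - i) := by
          have : ((2 ^ (Nat.clog 2 (n ^ (p - 1 - i)) + 1) : ℕ) : ℚ)
              ≤ ((4 * n ^ (p - 1 - i) : ℕ) : ℚ) := by exact_mod_cast hkey
          push_cast at this
          convert this using 2
        have hx30 : (0 : ℚ) ≤ x - 3 := by linarith
        calc x ^ (i - 1) * (x - 3) * 2 ^ (Nat.clog 2 (n ^ (p - 1 - i)) + 1)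
            ≤ x ^ (i - 1) * x * (4 * x ^ (p - 1 - i)) := by
              apply mul_le_mul _ hkeyQ (by positivity) (by positivity)
              apply mul_le_mul_of_nonneg_left (by linarith) (by positivity)
          _ = 4 * (x ^ (i - 1) * x * x ^ (p - 1 - i)) := by ring
          _ = 4 * x ^ (p - 1) := by
              have hxe : x ^ (i - 1) * x * x ^ (p - 1 - i) = x ^ (p - 1) := by
                rw [← pow_succ, ← pow_add]
                congr 1
                omega
              rw [hxe]
      -- done
    have := Finset.sum_le_card_nsmul (Finset.Icc 1 (p - 1)) _ _ hbound
    rw [Nat.card_Icc, nsmul_eq_mul] at this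
    have hcard : ((p - 1 + 1 - 1 : ℕ) : ℚ) ≤ (p : ℚ) := by
      exact_mod_cast (by omega : p - 1 + 1 - 1 ≤ p)
    calc (∑ i ∈ Finset.Icc 1 (p - 1),
        x ^ (i - 1) * (x - 3) * 2 ^ (Nat.clog 2 (n ^ (p - 1 - i)) + 1))
        ≤ ((p - 1 + 1 - 1 : ℕ) : ℚ) * (4 * x ^ (p - 1)) := this
      _ ≤ (p : ℚ) * (4 * x ^ (p - 1)) := by
          apply mul_le_mul_of_nonneg_right hcard (by positivity)
      _ = 4 * ((p : ℚ) * x ^ (p - 1)) := by ring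
      _ ≤ 4 * ((p : ℚ) ^ 2 * x ^ p) := by
          have hmm : (p : ℚ) * x ^ (p - 1) ≤ (p : ℚ) ^ 2 * x ^ p :=
            mul_le_mul (by nlinarith) hXle hX0.le (by positivity)
          linarith
      _ = 4 * (x ^ p * (p : ℚ) ^ 2) := by ring
  have hQ : (0 : ℚ) ≤ x ^ p * (p : ℚ) ^ 2 := by positivity
  have hfinal : (|B| + |Cd| + 7) * x ^ p * (p : ℚ) ^ 2
      = |B| * (x ^ p * (p : ℚ) ^ 2) + |Cd| * (x ^ p * (p : ℚ) ^ 2)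
        + x ^ p * (p : ℚ) ^ 2 + x ^ p * (p : ℚ) ^ 2
        + 4 * (x ^ p * (p : ℚ) ^ 2) + x ^ p * (p : ℚ) ^ 2 := by ring
  linarith [h1, h2, h3, h4, h5, hQ]
end
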